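/- Let G be a graph on n vertices with adjacency matrix A and walk matrix W, let p be a prime and λ₀ an integer. Suppose the rank of W over the field with p elements is n−1, the rank of A − λ₀I over the field with p elements is n−2, and z is an integer vector with Az ≡ λ₀z (mod p), eᵀz ≡ 0 (mod p), and z ≢ 0 (mod p). Then the rank over the field with p elements of the n×(n+1) matrix [A − λ₀I, z] obtained by appending z as an extra column to A − λ₀I equals n−1; in particular, z mod p does not lie in the column space of A − λ₀I over F_p. -/

import Mathlib

open Matrix

open scoped Classical in
/-- The (0,1)-adjacency matrix of a simple graph on `Fin n`, with entries in `R`. -/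
noncomputable def adjMat {n : ℕ} (R : Type*) [Zero R] [One R] (G : SimpleGraph (Fin n)) :
    Matrix (Fin n) (Fin n) R :=
  Matrix.of fun i j => if G.Adj i j then 1 else 0

/-- The walk matrix `W = [e, Ae, A²e, …, A^{n−1}e]` of a square matrix `A`,
where `e` is the all-ones vector: the `j`-th column is `A^j e`. -/
noncomputable def walkMatrix {R : Type*} [CommRing R] {n : ℕ} (A : Matrix (Fin n) (Fin n) R) :
    Matrix (Fin n) (Fin n) R :=
  Matrix.of fun i j => (A ^ (j : ℕ) *ᵥ fun _ => 1) i

/-!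
Work over `F_p`, with `B = A - λ₀I`. For symmetric `A`, if `A y = λ₀ y + z` and `z` is
orthogonal to every `Aʲe`, then `yᵀAʲe = λ₀ʲ (yᵀe)`, i.e. `Wᵀy` is a multiple of `(λ₀ʲ)ⱼ`.
Applied to `y = z` this gives `Wᵀz = 0`, so `ker Wᵀ = span {z} ⊆ ker B` by the rank of `W`.
Since `ker B` is two-dimensional, some `u ∈ ker B` has `Wᵀu ≠ 0`. If `By = z`, both `Wᵀy` and
`Wᵀu` are multiples of `(λ₀ʲ)ⱼ`, so `y - du ∈ ker Wᵀ ⊆ ker B` for a suitable `d`, and then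
`z = By = 0`. Appending a column outside the column space raises the rank by one.
-/

namespace Matrix

variable {R : Type*} [CommRing R] {ι : Type*} [Fintype ι] [DecidableEq ι]

theorem dotProduct_pow_mulVec_of_mulVec_eq_smul_add {A : Matrix ι ι R} (hA : A.IsSymm)
    {c : R} {y z w : ι → R} (hy : A *ᵥ y = c • y + z) (hz : ∀ j : ℕ, z ⬝ᵥ (A ^ j *ᵥ w) = 0)
    (j : ℕ) : y ⬝ᵥ (A ^ j *ᵥ w) = c ^ j * (y ⬝ᵥ w) := by
  induction j with
  | zero => simp
  | succ j ih =>
    rw [pow_succ', ← mulVec_mulVec, dotProduct_mulVec, ← mulVec_transpose, hA.eq, hy,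
      add_dotProduct, smul_dotProduct, hz, ih, smul_eq_mul, add_zero, pow_succ', mul_assoc]

theorem transpose_walkMatrix_mulVec_of_mulVec_eq_smul_add {n : ℕ}
    {A : Matrix (Fin n) (Fin n) R} (hA : A.IsSymm) {c : R} {y z : Fin n → R}
    (hy : A *ᵥ y = c • y + z) (hz : ∀ j : ℕ, z ⬝ᵥ (A ^ j *ᵥ 1) = 0) :
    (walkMatrix A)ᵀ *ᵥ y = (y ⬝ᵥ 1) • fun j : Fin n => c ^ (j : ℕ) := by
  ext j
  have hcol : ((walkMatrix A)ᵀ *ᵥ y) j = y ⬝ᵥ (A ^ (j : ℕ) *ᵥ 1) := by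
    simp only [mulVec, dotProduct, transpose_apply, walkMatrix, of_apply, mul_comm]
    rfl
  rw [hcol, dotProduct_pow_mulVec_of_mulVec_eq_smul_add hA hy hz, Pi.smul_apply, smul_eq_mul,
    mul_comm]

theorem walkMatrix_map {S : Type*} [CommRing S] {n : ℕ} (A : Matrix (Fin n) (Fin n) R)
    (f : R →+* S) : (walkMatrix A).map f = walkMatrix (A.map f) := by
  ext i j
  simp only [map_apply, walkMatrix, of_apply, RingHom.map_mulVec, ← f.mapMatrix_apply,
    ← map_pow, Function.comp_def, map_one]

end Matrix

theorem adjMat_isSymm {n : ℕ} (R : Type*) [Zero R] [One R] (G : SimpleGraph (Fin n)) :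
    (adjMat R G).IsSymm := by
  ext i j
  rw [transpose_apply, adjMat, of_apply, of_apply, G.adj_comm]

theorem two_le_card_of_ne_zero_of_dotProduct_one_eq_zero {R ι : Type*} [Semiring R] [Fintype ι]
    {z : ι → R} (hz : z ≠ 0) (h : z ⬝ᵥ 1 = 0) : 2 ≤ Fintype.card ι := by
  by_contra! hcard
  have : Subsingleton ι := Fintype.card_le_one_iff_subsingleton.mp (by omega)
  refine hz (funext fun i => ?_)
  rwa [dotProduct_one, Fintype.sum_subsingleton _ i] at h

namespace Matrix

variable {K : Type*} [Field K]

theorem finrank_ker_mulVecLin {m ι : Type*} [Fintype ι] (M : Matrix m ι K) :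
    Module.finrank K (LinearMap.ker M.mulVecLin) = Fintype.card ι - M.rank := by
  have := LinearMap.finrank_range_add_finrank_ker M.mulVecLin
  rw [Module.finrank_fintype_fun_eq_card] at this
  rw [rank]
  omega

theorem rank_fromCols_of_notMem_range {m ι : Type*} [Finite m] [Fintype ι]
    (M : Matrix m ι K) {v : m → K} (hv : v ∉ LinearMap.range M.mulVecLin) :
    (fromCols M (of fun i (_ : Unit) => v i)).rank = M.rank + 1 := by
  have hcol : (fromCols M (of fun i (_ : Unit) => v i)).col = Sum.elim M.col fun _ => v := by
    ext (_ | _) <;> rfl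
  rw [rank, range_mulVecLin, hcol, Set.Sum.elim_range, Submodule.span_union, Set.range_const,
    ← range_mulVecLin, Submodule.finrank_sup_span_singleton hv, rank]

theorem notMem_range_sub_smul_one_of_rank_walkMatrix {n : ℕ} {A : Matrix (Fin n) (Fin n) K}
    (hA : A.IsSymm) {c : K} (hW : (walkMatrix A).rank = n - 1) (hB : (A - c • 1).rank = n - 2)
    {z : Fin n → K} (hz : A *ᵥ z = c • z) (hz1 : z ⬝ᵥ 1 = 0) (hz0 : z ≠ 0) :
    z ∉ LinearMap.range (A - c • 1).mulVecLin := by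
  set B := A - c • 1
  have hn : 2 ≤ n := by
    simpa using two_le_card_of_ne_zero_of_dotProduct_one_eq_zero hz0 hz1
  have hsub : ∀ v, B *ᵥ v = A *ᵥ v - c • v := fun v => by
    rw [sub_mulVec, smul_mulVec, one_mulVec]
  have hz' : A *ᵥ z = c • z + 0 := by rw [hz, add_zero]
  have hzA : ∀ j : ℕ, z ⬝ᵥ (A ^ j *ᵥ 1) = 0 := fun j => by
    rw [dotProduct_pow_mulVec_of_mulVec_eq_smul_add hA hz' (fun _ => zero_dotProduct _), hz1,
      mul_zero]
  have hWz : (walkMatrix A)ᵀ *ᵥ z = 0 := by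
    rw [transpose_walkMatrix_mulVec_of_mulVec_eq_smul_add hA hz' (fun _ => zero_dotProduct _),
      hz1, zero_smul]
  have hkerW : LinearMap.ker (walkMatrix A)ᵀ.mulVecLin = Submodule.span K {z} := by
    refine (Submodule.eq_of_le_of_finrank_eq ?_ ?_).symm
    · rw [Submodule.span_le, Set.singleton_subset_iff]
      exact hWz
    · rw [finrank_span_singleton hz0, finrank_ker_mulVecLin, rank_transpose, hW,
        Fintype.card_fin]
      omega
  have hkerW_le : LinearMap.ker (walkMatrix A)ᵀ.mulVecLin ≤ LinearMap.ker B.mulVecLin := by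
    rw [hkerW, Submodule.span_le, Set.singleton_subset_iff, SetLike.mem_coe, LinearMap.mem_ker,
      mulVecLin_apply, hsub, hz, sub_self]
  obtain ⟨u, huB, huW⟩ :
      ∃ u ∈ LinearMap.ker B.mulVecLin, u ∉ LinearMap.ker (walkMatrix A)ᵀ.mulVecLin := by
    refine SetLike.not_le_iff_exists.mp fun hle => ?_
    have := Submodule.finrank_mono hle
    rw [finrank_ker_mulVecLin, finrank_ker_mulVecLin, rank_transpose, hW, hB,
      Fintype.card_fin] at this
    omega
  rintro ⟨y, hy⟩
  have hBu : B *ᵥ u = 0 := huB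
  have hWu := transpose_walkMatrix_mulVec_of_mulVec_eq_smul_add hA (z := 0)
    (by rw [add_zero, ← sub_eq_zero, ← hsub, hBu]) (fun _ => zero_dotProduct _)
  have hWy := transpose_walkMatrix_mulVec_of_mulVec_eq_smul_add hA
    (by rw [← sub_eq_iff_eq_add', ← hsub]; exact hy) hzA
  have hu1 : u ⬝ᵥ 1 ≠ 0 := fun h =>
    huW (by rw [LinearMap.mem_ker, mulVecLin_apply, hWu, h, zero_smul])
  have hyu : y - ((y ⬝ᵥ 1) / (u ⬝ᵥ 1)) • u ∈ LinearMap.ker B.mulVecLin := by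
    refine hkerW_le ?_
    rw [LinearMap.mem_ker, mulVecLin_apply, mulVec_sub, mulVec_smul, hWy, hWu, smul_smul,
      div_mul_cancel₀ _ hu1, sub_self]
  rw [LinearMap.mem_ker, mulVecLin_apply, mulVec_sub, mulVec_smul, hBu, smul_zero,
    sub_zero] at hyu
  exact hz0 (hy ▸ hyu)

theorem rank_fromCols_sub_smul_one_of_rank_walkMatrix {n : ℕ} {A : Matrix (Fin n) (Fin n) K}
    (hA : A.IsSymm) {c : K} (hW : (walkMatrix A).rank = n - 1) (hB : (A - c • 1).rank = n - 2)
    {z : Fin n → K} (hz : A *ᵥ z = c • z) (hz1 : z ⬝ᵥ 1 = 0) (hz0 : z ≠ 0) :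
    (fromCols (A - c • 1) (of fun i (_ : Unit) => z i)).rank = n - 1 ∧
      z ∉ LinearMap.range (A - c • 1).mulVecLin := by
  have hnot := notMem_range_sub_smul_one_of_rank_walkMatrix hA hW hB hz hz1 hz0
  have hn : 2 ≤ n := by
    simpa using two_le_card_of_ne_zero_of_dotProduct_one_eq_zero hz0 hz1
  refine ⟨?_, hnot⟩
  rw [rank_fromCols_of_notMem_range _ hnot, hB]
  omega

end Matrix

/-- **Lemma 3.8.** Suppose `rank_p W = n − 1`,
`rank_p (A − λ₀I) = n − 2`, and `z` satisfies `Az ≡ λ₀z`, `eᵀz ≡ 0`, `z ≢ 0 (mod p)`.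
Then the augmented matrix `[A − λ₀I, z]` has rank `n − 1` over `F_p`; in particular
`z mod p` is not in the column space of `A − λ₀I` over `F_p`. -/
theorem stmt_11 {n : ℕ} (G : SimpleGraph (Fin n))
    (A : Matrix (Fin n) (Fin n) ℤ) (hA : A = adjMat ℤ G)
    (W : Matrix (Fin n) (Fin n) ℤ) (hW : W = walkMatrix A)
    (p : ℕ) (hp : p.Prime) (lam : ℤ)
    (hrankW : (W.map (Int.cast : ℤ → ZMod p)).rank = n - 1)
    (hrankA : ((A - lam • (1 : Matrix (Fin n) (Fin n) ℤ)).map (Int.cast : ℤ → ZMod p)).rank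
      = n - 2)
    (z : Fin n → ℤ)
    (hz0 : ∀ i, (p : ℤ) ∣ ((A *ᵥ z) i - lam * z i))
    (hz1 : (p : ℤ) ∣ (fun _ => (1 : ℤ)) ⬝ᵥ z)
    (hz2 : ¬(∀ i, (p : ℤ) ∣ z i)) :
    ((Matrix.fromCols (A - lam • (1 : Matrix (Fin n) (Fin n) ℤ))
        (Matrix.of fun i (_ : Unit) => z i)).map (Int.cast : ℤ → ZMod p)).rank = n - 1 ∧
      ¬ ∃ y : Fin n → ZMod p,
        ((A - lam • (1 : Matrix (Fin n) (Fin n) ℤ)).map (Int.cast : ℤ → ZMod p)) *ᵥ y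
          = fun i => ((z i : ZMod p)) := by
  have : Fact p.Prime := ⟨hp⟩
  set f : ℤ →+* ZMod p := Int.castRingHom (ZMod p)
  set B := (A - lam • (1 : Matrix (Fin n) (Fin n) ℤ)).map f
  replace hrankA : B.rank = n - 2 := hrankA
  rw [fromCols_map]
  change (fromCols B (of fun i (_ : Unit) => (f ∘ z) i)).rank = n - 1 ∧ ¬∃ y, B *ᵥ y = f ∘ z
  have hB : B = A.map f - f lam • 1 := by
    rw [show B = f.mapMatrix (A - lam • 1) from rfl, map_sub, map_zsmul, map_one,
      ← Int.cast_smul_eq_zsmul (ZMod p)]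
    rfl
  have hsymm : (A.map f).IsSymm := hA ▸ (adjMat_isSymm ℤ G).map _
  have hWf : (walkMatrix (A.map f)).rank = n - 1 := by
    rwa [← walkMatrix_map, ← hW]
  have hzf : A.map f *ᵥ (f ∘ z) = f lam • (f ∘ z) := by
    ext i
    have h := (ZMod.intCast_zmod_eq_zero_iff_dvd _ p).2 (hz0 i)
    rwa [Int.cast_sub, Int.cast_mul, sub_eq_zero, ← eq_intCast f, RingHom.map_mulVec] at h
  have hzf1 : (f ∘ z) ⬝ᵥ 1 = 0 := by
    have h := (ZMod.intCast_zmod_eq_zero_iff_dvd _ p).2 hz1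
    rwa [dotProduct_comm, ← eq_intCast f, RingHom.map_dotProduct,
      show f ∘ (fun _ => (1 : ℤ)) = 1 from funext fun _ => map_one f] at h
  have hzf0 : f ∘ z ≠ 0 := fun h => hz2 fun i =>
    (ZMod.intCast_zmod_eq_zero_iff_dvd _ p).1 (congrFun h i)
  rw [hB] at hrankA ⊢
  exact rank_fromCols_sub_smul_one_of_rank_walkMatrix hsymm hWf hrankA hzf hzf1 hzf0
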